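/- Let f : ℂ → ℝ be a continuous function satisfying the sub-mean value property on all of ℂ, i.e., f(x) ≤ (1/2π)∫₀^{2π} f(x + re^{iθ}) dθ for every x ∈ ℂ and r > 0. Suppose f admits a harmonic majorant, i.e., there exists a harmonic function h on ℂ with f ≤ h. Then for every x ∈ ℂ the limit F(x) := lim_{r→∞} (1/2π)∫₀^{2π} f(x + re^{iθ}) dθ exists, the function F is harmonic on ℂ, F is a harmonic majorant of f, and F ≤ H for every harmonic majorant H of f (i.e., F is the least harmonic majorant of f). -/

import Mathlib

open MeasureTheory Metric Complex Filter

/-- The average of `u` over the circle of center `z` and radius `r`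
(with respect to the uniform probability measure on the circle). -/
noncomputable def circleAvg (u : ℂ → ℝ) (z : ℂ) (r : ℝ) : ℝ :=
  (2 * Real.pi)⁻¹ * ∫ θ in (0:ℝ)..(2 * Real.pi), u (z + r * Complex.exp (θ * Complex.I))

/-- A function is harmonic on `ℂ ≅ ℝ²` iff it is continuous and satisfies the
mean value property over every circle; this is the classical characterization
equivalent to being `C²` with vanishing Laplacian. -/
def HarmonicPlane (h : ℂ → ℝ) : Prop :=
  Continuous h ∧ ∀ x : ℂ, ∀ r : ℝ, 0 < r → h x = circleAvg h x r

/-!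
If `h` is a harmonic majorant of `f`, then `f - h` is subharmonic and bounded above on `ℂ`, hence
constant, because the plane is parabolic: by the maximum principle, on an annulus
`r < ‖z - a‖ < R` a subharmonic `g` lies below the function of `log ‖z - a‖` that interpolates
between its bounds on the two circles, and letting `R → ∞` bounds `g` everywhere by its maximum on
arbitrarily small circles around `a`. So `f` is `h` plus a constant; it is harmonic, its circle
averages are constant, and it is its own least harmonic majorant.
-/

open Real Topology

theorem circleAvg_eq_circleAverage (u : ℂ → ℝ) (z : ℂ) (r : ℝ) :
    circleAvg u z r = circleAverage u z r := rfl

theorem eqOn_sphere_of_le_of_le_circleAverage {v : ℂ → ℝ} {c : ℂ} {R M : ℝ}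
    (hv : ContinuousOn v (sphere c |R|)) (hle : ∀ x ∈ sphere c |R|, v x ≤ M)
    (havg : M ≤ circleAverage v c R) : ∀ x ∈ sphere c |R|, v x = M := by
  rw [← image_circleMap_Ioc]
  rintro _ ⟨θ₀, hθ₀, rfl⟩
  by_contra hne
  have hint : ∫ θ in 0..2 * π, v (circleMap c R θ) < ∫ _ in 0..2 * π, M :=
    intervalIntegral.integral_lt_integral_of_continuousOn_of_le_of_exists_lt two_pi_pos
      (hv.comp (continuous_circleMap c R).continuousOn fun θ _ ↦ circleMap_mem_sphere' c R θ)
      continuousOn_const (fun θ _ ↦ hle _ (circleMap_mem_sphere' c R θ))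
      ⟨θ₀, Set.Ioc_subset_Icc_self hθ₀, (hle _ (circleMap_mem_sphere' c R θ₀)).lt_of_ne hne⟩
  have : circleAverage v c R < circleAverage (fun _ ↦ M) c R :=
    mul_lt_mul_of_pos_left hint (by positivity)
  rw [circleAverage_const] at this
  linarith

theorem le_of_subMeanValue_of_le_on_frontier {U : Set ℂ} (hU : IsOpen U)
    (hUb : Bornology.IsBounded U) {v : ℂ → ℝ} (hv : ContinuousOn v (closure U))
    (hsub : ∀ z ∈ U, ∀ s > 0, closedBall z s ⊆ U → v z ≤ circleAverage v z s)
    {M : ℝ} (hfr : ∀ z ∈ frontier U, v z ≤ M) : ∀ z ∈ closure U, v z ≤ M := by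
  rcases U.eq_empty_or_nonempty with rfl | hne
  · simp
  have hK : IsCompact (closure U) := hUb.isCompact_closure
  obtain ⟨z₀, hz₀, hmax⟩ := hK.exists_isMaxOn hne.closure hv
  set T := closure U ∩ v ⁻¹' {v z₀}
  have hT : IsCompact T := hK.of_isClosed_subset
    (hv.preimage_isClosed_of_isClosed isClosed_closure isClosed_singleton) Set.inter_subset_left
  -- among the maximum points, one with largest real part cannot be interior
  obtain ⟨w, ⟨hwK, hvw : v w = v z₀⟩, hwmax⟩ :=
    hT.exists_isMaxOn ⟨z₀, hz₀, rfl⟩ continuous_re.continuousOn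
  suffices hwU : w ∉ U by
    have : v w ≤ M := hfr w ⟨hwK, by rwa [hU.interior_eq]⟩
    exact fun z hz ↦ (hmax hz).trans (hvw ▸ this)
  intro hwU
  obtain ⟨δ, hδ, hball⟩ := Metric.isOpen_iff.1 hU w hwU
  have hcb : closedBall w (δ / 2) ⊆ U := (closedBall_subset_ball (by linarith)).trans hball
  have hS : sphere w |δ / 2| ⊆ closure U := by
    rw [abs_of_pos (by positivity)]
    exact sphere_subset_closedBall.trans (hcb.trans subset_closure)
  have heq := eqOn_sphere_of_le_of_le_circleAverage (hv.mono hS) (fun x hx ↦ hmax (hS hx))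
    (hvw ▸ hsub w hwU _ (by positivity) hcb)
  have hp : w + (δ / 2 : ℝ) ∈ sphere w |δ / 2| := by simp [abs_div]
  have : (w + (δ / 2 : ℝ)).re ≤ w.re := hwmax ⟨hS hp, heq _ hp⟩
  rw [add_re, ofReal_re] at this
  linarith

theorem circleAverage_log_norm_sub_const_of_le_norm {a c : ℂ} {R : ℝ} (hR : 0 < R)
    (h : R ≤ ‖c - a‖) : circleAverage (Real.log ‖· - a‖) c R = Real.log ‖c - a‖ := by
  have hR' : 1 ≤ R⁻¹ * ‖c - a‖ := by rwa [le_inv_mul_iff₀ hR, mul_one]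
  rw [circleAverage_log_norm_sub_const_eq_log_radius_add_posLog hR.ne',
    posLog_eq_log (by rwa [abs_of_nonneg (by positivity)]), Real.log_mul (inv_ne_zero hR.ne')
      (hR.trans_le h).ne', Real.log_inv]
  ring

theorem circleIntegrable_const_add_mul_log_norm_sub (a c : ℂ) (R α k : ℝ) :
    CircleIntegrable (fun z ↦ α + k * Real.log ‖z - a‖) c R :=
  (circleIntegrable_const α c R).add (circleIntegrable_log_norm_sub_const R).const_smul

theorem circleAverage_const_add_mul_log_norm_sub {a c : ℂ} {R : ℝ} (α k : ℝ) (hR : 0 < R)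
    (h : R ≤ ‖c - a‖) :
    circleAverage (fun z ↦ α + k * Real.log ‖z - a‖) c R = α + k * Real.log ‖c - a‖ := by
  have hlog : CircleIntegrable (fun z ↦ k • Real.log ‖z - a‖) c R :=
    (circleIntegrable_log_norm_sub_const R).const_smul
  have hsum := circleAverage_fun_add (circleIntegrable_const α c R) hlog
  rw [circleAverage_fun_smul, circleAverage_const,
    circleAverage_log_norm_sub_const_of_le_norm hR h] at hsum
  exact hsum

section Annulus

variable {X : Type*} [PseudoMetricSpace X]

theorem closure_ball_sdiff_closedBall_subset (a : X) (r R : ℝ) :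
    closure (ball a R \ closedBall a r) ⊆ closedBall a R \ ball a r :=
  closure_minimal (Set.sdiff_subset_sdiff ball_subset_closedBall ball_subset_closedBall)
    (isClosed_closedBall.sdiff isOpen_ball)

theorem frontier_ball_sdiff_closedBall_subset (a : X) (r R : ℝ) :
    frontier (ball a R \ closedBall a r) ⊆ sphere a R ∪ sphere a r := by
  intro z hz
  rw [(isOpen_ball.sdiff isClosed_closedBall).frontier_eq] at hz
  have hzK := closure_ball_sdiff_closedBall_subset a r R hz.1
  have hzU := hz.2
  simp only [Set.mem_sdiff, mem_ball, mem_closedBall, not_and, not_not, not_lt] at hzK hzU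
  rcases hzK.1.lt_or_eq with hzR | hzR
  · exact Or.inr (le_antisymm (hzU hzR) hzK.2)
  · exact Or.inl hzR

end Annulus

theorem le_of_subMeanValue_of_le_on_spheres {g : ℂ → ℝ} (hg : Continuous g)
    (hsub : ∀ z, ∀ s > 0, g z ≤ circleAverage g z s) {a b : ℂ} {r R m M : ℝ}
    (hr : 0 < r) (hrb : r < ‖b - a‖) (hbR : ‖b - a‖ < R)
    (hm : ∀ z ∈ sphere a r, g z ≤ m) (hM : ∀ z ∈ sphere a R, g z ≤ M) :
    g b ≤ m + (M - m) / (Real.log R - Real.log r) * (Real.log ‖b - a‖ - Real.log r) := by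
  have hlog : Real.log R - Real.log r ≠ 0 := (sub_pos.2 (Real.log_lt_log hr (hrb.trans hbR))).ne'
  set k := (M - m) / (Real.log R - Real.log r)
  set φ : ℂ → ℝ := fun z ↦ (m - k * Real.log r) + k * Real.log ‖z - a‖
  have hφ_eq : ∀ z, φ z = m + k * (Real.log ‖z - a‖ - Real.log r) := fun z ↦ by ring
  set U := ball a R \ closedBall a r
  have hUo : IsOpen U := isOpen_ball.sdiff isClosed_closedBall
  have hv : ContinuousOn (g - φ) (closure U) := by
    refine hg.continuousOn.sub (continuousOn_const.add (continuousOn_const.mul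
      ((continuous_norm.comp (continuous_sub_right a)).continuousOn.log fun z hz ↦ ?_)))
    have := (closure_ball_sdiff_closedBall_subset a r R hz).2
    rw [mem_ball, dist_eq_norm] at this
    simp only [Function.comp_apply]
    linarith
  have hsubU : ∀ z ∈ U, ∀ s > 0, closedBall z s ⊆ U → (g - φ) z ≤ circleAverage (g - φ) z s := by
    intro z _ s hs hzs
    have hsz : s ≤ ‖z - a‖ := by
      by_contra! h
      refine (hzs (mem_closedBall.2 ?_)).2 (mem_closedBall_self hr.le)
      rw [dist_eq_norm, norm_sub_rev]
      exact h.le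
    rw [circleAverage_sub hg.continuousOn.circleIntegrable'
      (circleIntegrable_const_add_mul_log_norm_sub _ _ _ _ _),
      circleAverage_const_add_mul_log_norm_sub _ _ hs hsz]
    exact sub_le_sub_right (hsub z s hs) _
  have hfr : ∀ z ∈ frontier U, (g - φ) z ≤ 0 := by
    intro z hz
    rw [Pi.sub_apply, sub_nonpos, hφ_eq]
    rcases frontier_ball_sdiff_closedBall_subset a r R hz with hzR | hzr
    · rw [mem_sphere_iff_norm.1 hzR, div_mul_cancel₀ _ hlog, add_sub_cancel]
      exact hM z hzR
    · rw [mem_sphere_iff_norm.1 hzr, sub_self, mul_zero, add_zero]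
      exact hm z hzr
  have hbU : b ∈ U :=
    ⟨by rwa [mem_ball, dist_eq_norm], by rwa [mem_closedBall, dist_eq_norm, not_le]⟩
  have := le_of_subMeanValue_of_le_on_frontier hUo (isBounded_ball.subset Set.sdiff_subset) hv
    hsubU hfr b (subset_closure hbU)
  rwa [Pi.sub_apply, sub_nonpos, hφ_eq] at this

theorem le_of_subMeanValue_of_bddAbove_of_le_on_sphere {g : ℂ → ℝ} (hg : Continuous g)
    (hsub : ∀ z, ∀ s > 0, g z ≤ circleAverage g z s) {B : ℝ} (hB : ∀ z, g z ≤ B)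
    {a b : ℂ} {r m : ℝ} (hr : 0 < r) (hrb : r < ‖b - a‖) (hm : ∀ z ∈ sphere a r, g z ≤ m) :
    g b ≤ m := by
  have hlim : Tendsto (fun R ↦ m + (B - m) / (Real.log R - Real.log r) *
      (Real.log ‖b - a‖ - Real.log r)) atTop (𝓝 m) := by
    have hden : Tendsto (fun R ↦ Real.log R - Real.log r) atTop atTop :=
      tendsto_atTop_add_const_right _ _ tendsto_log_atTop
    simpa using (((tendsto_const_nhds (x := B - m)).div_atTop hden).mul_const
      (Real.log ‖b - a‖ - Real.log r)).const_add m
  refine ge_of_tendsto hlim ?_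
  filter_upwards [eventually_gt_atTop ‖b - a‖] with R hR
  exact le_of_subMeanValue_of_le_on_spheres hg hsub hr hrb hR hm fun z _ ↦ hB z

theorem eq_of_subMeanValue_of_bddAbove {g : ℂ → ℝ} (hg : Continuous g)
    (hsub : ∀ z, ∀ s > 0, g z ≤ circleAverage g z s) {B : ℝ} (hB : ∀ z, g z ≤ B) (a b : ℂ) :
    g a = g b := by
  suffices h : ∀ a b, g b ≤ g a from (h b a).antisymm (h a b)
  intro a b
  rcases eq_or_ne b a with rfl | hba
  · rfl
  have hd : 0 < ‖b - a‖ := norm_pos_iff.2 (sub_ne_zero.2 hba)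
  refine le_of_forall_pos_le_add fun ε hε ↦ ?_
  obtain ⟨δ, hδ, hball⟩ := Metric.continuousAt_iff.1 (hg.continuousAt (x := a)) ε hε
  have hr : 0 < min (δ / 2) (‖b - a‖ / 2) := lt_min (by positivity) (by positivity)
  refine le_of_subMeanValue_of_bddAbove_of_le_on_sphere hg hsub hB hr
    ((min_le_right _ _).trans_lt (half_lt_self hd)) fun z hz ↦ ?_
  have hza : dist z a < δ := (mem_sphere.1 hz).trans_lt ((min_le_left _ _).trans_lt (by linarith))
  have := hball hza
  rw [Real.dist_eq, abs_lt] at this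
  linarith

theorem subMeanValue_sub_of_harmonicPlane {f h : ℂ → ℝ} (hf : Continuous f)
    (hsub : ∀ z, ∀ s > 0, f z ≤ circleAverage f z s) (hh : HarmonicPlane h) :
    ∀ z, ∀ s > 0, (f - h) z ≤ circleAverage (f - h) z s := by
  intro z s hs
  rw [circleAverage_sub hf.continuousOn.circleIntegrable' hh.1.continuousOn.circleIntegrable',
    Pi.sub_apply, ← circleAvg_eq_circleAverage h, ← hh.2 z s hs]
  exact sub_le_sub_right (hsub z s hs) _

theorem HarmonicPlane.add_const {h : ℂ → ℝ} (hh : HarmonicPlane h) (c : ℝ) :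
    HarmonicPlane (fun z ↦ h z + c) := by
  refine ⟨hh.1.add continuous_const, fun z s hs ↦ ?_⟩
  rw [circleAvg_eq_circleAverage, circleAverage_fun_add hh.1.continuousOn.circleIntegrable'
    (circleIntegrable_const c z s), circleAverage_const, ← circleAvg_eq_circleAverage,
    ← hh.2 z s hs]

/-- least harmonic majorant as a limit of circle averages, in
`ℂ ≅ ℝ²`: if `f` is continuous, satisfies the sub-mean value property over
all circles (i.e. is subharmonic on `ℂ`) and admits a harmonic majorant, then
`F(x) := lim_{r→∞} (1/2π)∫₀^{2π} f(x+re^{iθ}) dθ` exists for every `x`, `F` is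
harmonic, `F` majorizes `f`, and `F` is below every harmonic majorant of `f`,
i.e. `F` is the least harmonic majorant of `f`. -/
theorem least_harmonic_majorant_plane (f : ℂ → ℝ) (hcont : Continuous f)
    (hsub : ∀ x : ℂ, ∀ r : ℝ, 0 < r → f x ≤ circleAvg f x r)
    (hmaj : ∃ h : ℂ → ℝ, HarmonicPlane h ∧ ∀ x, f x ≤ h x) :
    ∃ F : ℂ → ℝ,
      (∀ x : ℂ, Tendsto (fun r : ℝ => circleAvg f x r) atTop (nhds (F x))) ∧
      HarmonicPlane F ∧
      (∀ x : ℂ, f x ≤ F x) ∧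
      (∀ H : ℂ → ℝ, HarmonicPlane H → (∀ x, f x ≤ H x) → ∀ x, F x ≤ H x) := by
  obtain ⟨h, hh, hfh⟩ := hmaj
  have hconst : ∀ z, f z - h z = f 0 - h 0 := fun z ↦
    eq_of_subMeanValue_of_bddAbove (hcont.sub hh.1)
      (subMeanValue_sub_of_harmonicPlane hcont hsub hh) (fun z ↦ sub_nonpos.2 (hfh z)) z 0
  have hf : HarmonicPlane f := by
    convert hh.add_const (f 0 - h 0) using 1
    funext z
    linarith [hconst z]
  refine ⟨f, fun x ↦ tendsto_const_nhds.congr' ?_, hf, fun _ ↦ le_rfl, fun _ _ hH ↦ hH⟩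
  filter_upwards [eventually_gt_atTop 0] with r hr using hf.2 x r hr
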